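/- The map i:ℕ→ℕ defined by i(n)=⌊φn⌋+n−2 if n∈R_{1,0}, i(n)=⌊φn⌋+2 if n∈R_{3,1}, i(n)=⌊(φ−1)n⌋+2 if n∈R_{2,2}, and i(n)=⌊(φ−1)n⌋ if n∈R_{2,0}, is a well-defined bijection of ℕ onto itself whose sixth iterate is the identity, while its second and third iterates are not the identity; that is, i is a permutation of ℕ of order 6. -/

import Mathlib

/-- The golden ratio φ = (1 + √5)/2. -/
noncomputable def phi : ℝ := (1 + Real.sqrt 5) / 2

/-- The lower Wythoff sequence a(n) = ⌊nφ⌋. -/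
noncomputable def wa (n : ℕ) : ℕ := ⌊(n : ℝ) * phi⌋₊

/-- f_{i,j}(n) = F(i+1)·a(n) + F(i)·n − j. -/
noncomputable def fij (i : ℕ) (j : ℤ) (n : ℕ) : ℤ :=
  (Nat.fib (i + 1) : ℤ) * wa n + (Nat.fib i : ℤ) * n - j

/-- R_{i,j} = { f_{i,j}(n) : n ∈ ℕ, n ≥ 1 }. -/
def R (i : ℕ) (j : ℤ) : Set ℤ := {m | ∃ n : ℕ, 0 < n ∧ fij i j n = m}

open scoped Classical in
/-- i(n) = ⌊φn⌋+n−2 if n ∈ R_{1,0}, ⌊φn⌋+2 if n ∈ R_{3,1}, ⌊(φ−1)n⌋+2 if n ∈ R_{2,2},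
and ⌊(φ−1)n⌋ if n ∈ R_{2,0}. -/
noncomputable def imap (n : ℕ) : ℕ :=
  if (n : ℤ) ∈ R 1 0 then wa n + n - 2
  else if (n : ℤ) ∈ R 3 1 then wa n + 2
  else if (n : ℤ) ∈ R 2 2 then ⌊(phi - 1) * (n : ℝ)⌋₊ + 2
  else ⌊(phi - 1) * (n : ℝ)⌋₊

/-!
By Rayleigh's theorem for `φ` and `φ² = φ + 1`, every positive integer is exactly one of `a(m)`,
`b(m)` with `m ≥ 1`, and `a` is injective. Applying this three times, every `n ≥ 1` is
`b(m)`, `a(b(a(m)))`, `a(a(a(m)))`, `a(a(b(m)))` or `a(b(b(m)))`, and these forms do not overlap.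
With `a(a(n)) = b(n) - 1` and `a(b(n)) = a(n) + b(n)` one identifies `R_{1,0} = b(ℕ)`,
`R_{2,2} = a(a(a(ℕ)))`, `R_{3,1} = a(a(b(ℕ)))`, and finds that `i` acts on the forms as the
3-cycle `b(m) ↦ a(b(a(m))) ↦ a(a(a(m))) ↦ b(m)` and the 2-cycle `a(a(b(m))) ↔ a(b(b(m)))`.
-/

open Real goldenRatio Function Set
open scoped symmDiff

lemma wa_def (n : ℕ) : wa n = ⌊(n : ℝ) * φ⌋₊ := rfl

/-- The upper Wythoff sequence `b(n) = ⌊nφ²⌋`. -/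
noncomputable def wb (n : ℕ) : ℕ := wa n + n

lemma wa_eq_iff {n v : ℕ} : wa n = v ↔ (v : ℝ) ≤ n * φ ∧ n * φ < v + 1 :=
  Nat.floor_eq_iff (mul_nonneg n.cast_nonneg goldenRatio_pos.le)

lemma le_wa (n : ℕ) : n ≤ wa n :=
  Nat.le_floor (le_mul_of_one_le_right n.cast_nonneg one_lt_goldenRatio.le)

lemma wa_strictMono : StrictMono wa := by
  refine strictMono_nat_of_lt_succ fun n => ?_
  rw [Nat.lt_iff_add_one_le, wa_def, wa_def,
    ← Nat.floor_add_one (mul_nonneg n.cast_nonneg goldenRatio_pos.le)]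
  refine Nat.floor_le_floor ?_
  push_cast
  nlinarith [one_lt_goldenRatio]

lemma wa_injective : Injective wa := wa_strictMono.injective

@[simp] lemma wa_pos_iff {n : ℕ} : 0 < wa n ↔ 0 < n :=
  ⟨fun h => Nat.pos_of_ne_zero (by rintro rfl; simp [wa] at h),
    fun h => h.trans_le (le_wa n)⟩

@[simp] lemma wb_pos_iff {n : ℕ} : 0 < wb n ↔ 0 < n := by
  simp [wb]

lemma wa_lt_mul_goldenRatio {n : ℕ} (hn : 0 < n) : (wa n : ℝ) < n * φ :=
  (Nat.floor_le (mul_nonneg n.cast_nonneg goldenRatio_pos.le)).lt_of_ne fun h =>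
    (goldenRatio_irrational.natCast_mul hn.ne').ne_nat _ h.symm

lemma mul_goldenRatio_lt_wa_add_one (n : ℕ) : n * φ < wa n + 1 := Nat.lt_floor_add_one _

lemma floor_goldenRatio_sub_one_mul_add (n : ℕ) : ⌊(phi - 1) * n⌋₊ + n = wa n := by
  rw [wa, ← Nat.floor_add_natCast
    (show 0 ≤ (phi - 1) * n from mul_nonneg (sub_nonneg.2 one_lt_goldenRatio.le) n.cast_nonneg)]
  congr 1
  ring

lemma wa_wa_add_one {n : ℕ} (hn : 0 < n) : wa (wa n) + 1 = wb n := by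
  have hlt := wa_lt_mul_goldenRatio hn
  have hgt := mul_goldenRatio_lt_wa_add_one n
  have hpos : 0 < wa n := wa_pos_iff.2 hn
  obtain ⟨v, hv⟩ : ∃ v, wa n + n = v + 1 := ⟨wa n + n - 1, by omega⟩
  suffices wa (wa n) = v by simp [wb, hv, this]
  have hv' : (wa n : ℝ) + n = v + 1 := by exact_mod_cast hv
  rw [wa_eq_iff]
  -- `a(n) φ = a(n) + a(n) / φ` and `n - 1 / φ < a(n) / φ < n`
  constructor <;> nlinarith [goldenRatio_sq, one_lt_goldenRatio, goldenRatio_lt_two]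

lemma wa_wb (n : ℕ) : wa (wb n) = wa n + wb n := by
  have hle : (wa n : ℝ) ≤ n * φ := Nat.floor_le (mul_nonneg n.cast_nonneg goldenRatio_pos.le)
  have hgt := mul_goldenRatio_lt_wa_add_one n
  rw [wa_eq_iff, wb]
  push_cast
  -- `(a(n) + n) φ - (2a(n) + n) = (a(n) + n) / φ - a(n) ∈ [0, 1)` iff `a(n) ≤ nφ < a(n) + 1`
  constructor <;> nlinarith [goldenRatio_sq, one_lt_goldenRatio, goldenRatio_lt_two]

lemma goldenRatio_holderConjugate : HolderConjugate φ (φ + 1) := by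
  rw [holderConjugate_iff_eq_conjExponent one_lt_goldenRatio,
    eq_div_iff (sub_ne_zero.2 one_lt_goldenRatio.ne')]
  linear_combination goldenRatio_sq

lemma beattySeq_goldenRatio (k : ℕ) : beattySeq φ k = wa k := by
  simp [beattySeq, wa_def, Int.natCast_floor_eq_floor (mul_nonneg k.cast_nonneg goldenRatio_pos.le)]

lemma beattySeq_goldenRatio_add_one (k : ℕ) : beattySeq (φ + 1) k = wb k := by
  rw [beattySeq, mul_add_one, Int.floor_add_intCast, ← beattySeq, beattySeq_goldenRatio, wb]
  push_cast
  rfl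

lemma setOf_pos_int_eq (f : ℤ → ℤ) :
    {f k | k > 0} = {n | ∃ k : ℕ, 0 < k ∧ f k = n} := by
  ext n
  constructor
  · rintro ⟨k, hk, rfl⟩
    lift k to ℕ using hk.le
    exact ⟨k, by exact_mod_cast hk, rfl⟩
  · rintro ⟨k, hk, rfl⟩
    exact ⟨k, by exact_mod_cast hk, rfl⟩

lemma wythoff_symmDiff :
    {n : ℤ | ∃ k : ℕ, 0 < k ∧ (wa k : ℤ) = n} ∆ {n | ∃ k : ℕ, 0 < k ∧ (wb k : ℤ) = n} =
      {n | 0 < n} := by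
  simpa [setOf_pos_int_eq, beattySeq_goldenRatio, beattySeq_goldenRatio_add_one] using
    Irrational.beattySeq_symmDiff_beattySeq_pos goldenRatio_holderConjugate goldenRatio_irrational

lemma wa_ne_wb {m k : ℕ} (hm : 0 < m) (hk : 0 < k) : wa m ≠ wb k := by
  intro h
  have hpos : (wa m : ℤ) ∈ {n : ℤ | 0 < n} := by simpa using hm
  rw [← wythoff_symmDiff, Set.mem_symmDiff] at hpos
  have hA : (wa m : ℤ) ∈ {n : ℤ | ∃ k : ℕ, 0 < k ∧ (wa k : ℤ) = n} := ⟨m, hm, rfl⟩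
  have hB : (wa m : ℤ) ∈ {n : ℤ | ∃ k : ℕ, 0 < k ∧ (wb k : ℤ) = n} := ⟨k, hk, by rw [h]⟩
  exact hpos.elim (fun h' => h'.2 hB) (fun h' => h'.2 hA)

lemma exists_wa_or_wb {n : ℕ} (hn : 0 < n) :
    (∃ m, 0 < m ∧ wa m = n) ∨ ∃ k, 0 < k ∧ wb k = n := by
  have h : (n : ℤ) ∈ {n : ℤ | 0 < n} := by simpa using hn
  rw [← wythoff_symmDiff, Set.mem_symmDiff] at h
  simp only [Set.mem_ofPred_eq, Nat.cast_inj] at h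
  rcases h with ⟨h, -⟩ | ⟨h, -⟩
  exacts [Or.inl h, Or.inr h]

lemma mem_R_iff_of_fij_eq {i : ℕ} {j : ℤ} {g : ℕ → ℕ} (hg : ∀ k, 0 < k → fij i j k = g k)
    {n : ℕ} : (n : ℤ) ∈ R i j ↔ ∃ k, 0 < k ∧ g k = n :=
  exists_congr fun k => ⟨fun ⟨hk, h⟩ => ⟨hk, by rw [hg k hk] at h; exact_mod_cast h⟩,
    fun ⟨hk, h⟩ => ⟨hk, by rw [hg k hk, h]⟩⟩

lemma mem_R10 {n : ℕ} : (n : ℤ) ∈ R 1 0 ↔ ∃ k, 0 < k ∧ wb k = n :=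
  mem_R_iff_of_fij_eq fun k _ => by simp [fij, wb]

lemma mem_R31 {n : ℕ} : (n : ℤ) ∈ R 3 1 ↔ ∃ k, 0 < k ∧ wa (wa (wb k)) = n := by
  refine mem_R_iff_of_fij_eq fun k hk => ?_
  have h1 := wa_wa_add_one (wb_pos_iff.2 hk)
  have h2 := wa_wb k
  rw [fij, show Nat.fib (3 + 1) = 3 from rfl, show Nat.fib 3 = 2 from rfl]
  unfold wb at *
  omega

lemma mem_R22 {n : ℕ} : (n : ℤ) ∈ R 2 2 ↔ ∃ k, 0 < k ∧ wa (wa (wa k)) = n := by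
  refine mem_R_iff_of_fij_eq fun k hk => ?_
  have h1 := wa_wa_add_one (wa_pos_iff.2 hk)
  have h2 := wa_wa_add_one hk
  rw [fij, show Nat.fib (2 + 1) = 2 from rfl, show Nat.fib 2 = 1 from rfl]
  unfold wb at *
  omega

lemma wa_not_mem_R10 {j : ℕ} (hj : 0 < j) : (wa j : ℤ) ∉ R 1 0 := by
  rw [mem_R10]
  rintro ⟨k, hk, h⟩
  exact wa_ne_wb hj hk h.symm

lemma imap_wb {m : ℕ} (hm : 0 < m) : imap (wb m) = wa (wb (wa m)) := by
  rw [imap, if_pos (mem_R10.2 ⟨m, hm, rfl⟩)]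
  have h1 := wa_wb m
  have h2 := wa_wb (wa m)
  have h3 := wa_wa_add_one hm
  unfold wb at *
  omega

lemma imap_wa_wb {x : ℕ} (hx : 0 < x) : imap (wa (wb x)) = wa (wa x) := by
  have hbx : 0 < wb x := wb_pos_iff.2 hx
  have h31 : (wa (wb x) : ℤ) ∉ R 3 1 := by
    rw [mem_R31]
    rintro ⟨k, hk, h⟩
    exact wa_ne_wb (wb_pos_iff.2 hk) hx (wa_injective h)
  have h22 : (wa (wb x) : ℤ) ∉ R 2 2 := by
    rw [mem_R22]
    rintro ⟨k, hk, h⟩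
    exact wa_ne_wb (wa_pos_iff.2 hk) hx (wa_injective h)
  rw [imap, if_neg (wa_not_mem_R10 hbx), if_neg h31, if_neg h22]
  have h1 := floor_goldenRatio_sub_one_mul_add (wa (wb x))
  have h2 := wa_wa_add_one hbx
  have h3 := wa_wa_add_one hx
  unfold wb at *
  omega

lemma imap_wa_wa_wa {m : ℕ} (hm : 0 < m) : imap (wa (wa (wa m))) = wb m := by
  have ham : 0 < wa m := wa_pos_iff.2 hm
  have h31 : (wa (wa (wa m)) : ℤ) ∉ R 3 1 := by
    rw [mem_R31]
    rintro ⟨k, hk, h⟩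
    exact wa_ne_wb hm hk (wa_injective (wa_injective h)).symm
  rw [imap, if_neg (wa_not_mem_R10 (wa_pos_iff.2 ham)), if_neg h31,
    if_pos (mem_R22.2 ⟨m, hm, rfl⟩)]
  have h1 := floor_goldenRatio_sub_one_mul_add (wa (wa (wa m)))
  have h2 := wa_wa_add_one (wa_pos_iff.2 ham)
  have h3 := wa_wa_add_one hm
  unfold wb at *
  omega

lemma imap_wa_wa_wb {m : ℕ} (hm : 0 < m) : imap (wa (wa (wb m))) = wa (wb (wb m)) := by
  have hbm : 0 < wb m := wb_pos_iff.2 hm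
  rw [imap, if_neg (wa_not_mem_R10 (wa_pos_iff.2 hbm)), if_pos (mem_R31.2 ⟨m, hm, rfl⟩)]
  have h1 := wa_wa_add_one (wa_pos_iff.2 hbm)
  have h2 := wa_wa_add_one hbm
  have h3 := wa_wb (wb m)
  unfold wb at *
  omega

lemma isPeriodicPt_imap_wb {m : ℕ} (hm : 0 < m) : IsPeriodicPt imap 3 (wb m) := by
  simp [IsPeriodicPt, IsFixedPt, imap_wb hm, imap_wa_wb (wa_pos_iff.2 hm), imap_wa_wa_wa hm]

lemma isPeriodicPt_imap_wa_wa_wb {m : ℕ} (hm : 0 < m) :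
    IsPeriodicPt imap 2 (wa (wa (wb m))) := by
  simp [IsPeriodicPt, IsFixedPt, imap_wa_wa_wb hm, imap_wa_wb (wb_pos_iff.2 hm)]

lemma exists_orbit_representative {n : ℕ} (hn : 0 < n) : ∃ m, 0 < m ∧
    (n = wb m ∨ n = imap (wb m) ∨ n = imap (imap (wb m)) ∨
      n = wa (wa (wb m)) ∨ n = imap (wa (wa (wb m)))) := by
  rcases exists_wa_or_wb hn with ⟨j, hj, rfl⟩ | ⟨m, hm, rfl⟩
  swap
  · exact ⟨m, hm, Or.inl rfl⟩
  rcases exists_wa_or_wb hj with ⟨i, hi, rfl⟩ | ⟨x, hx, rfl⟩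
  · rcases exists_wa_or_wb hi with ⟨m, hm, rfl⟩ | ⟨m, hm, rfl⟩
    · refine ⟨m, hm, Or.inr (Or.inr (Or.inl ?_))⟩
      rw [imap_wb hm, imap_wa_wb (wa_pos_iff.2 hm)]
    · exact ⟨m, hm, Or.inr (Or.inr (Or.inr (Or.inl rfl)))⟩
  · rcases exists_wa_or_wb hx with ⟨m, hm, rfl⟩ | ⟨m, hm, rfl⟩
    · exact ⟨m, hm, Or.inr (Or.inl (imap_wb hm).symm)⟩
    · exact ⟨m, hm, Or.inr (Or.inr (Or.inr (Or.inr (imap_wa_wa_wb hm).symm)))⟩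

lemma imap_iterate_six {n : ℕ} (hn : 0 < n) : imap^[6] n = n := by
  obtain ⟨m, hm, rfl | rfl | rfl | rfl | rfl⟩ := exists_orbit_representative hn
  · exact (isPeriodicPt_imap_wb hm).mul_const 2
  · exact (isPeriodicPt_imap_wb hm).apply.mul_const 2
  · exact (isPeriodicPt_imap_wb hm).apply.apply.mul_const 2
  · exact (isPeriodicPt_imap_wa_wa_wb hm).mul_const 3
  · exact (isPeriodicPt_imap_wa_wa_wb hm).apply.mul_const 3

lemma imap_mapsTo : MapsTo imap {n | 0 < n} {n | 0 < n} := by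
  intro n hn
  obtain ⟨m, hm, rfl | rfl | rfl | rfl | rfl⟩ := exists_orbit_representative hn <;>
    simp [hm, imap_wb, imap_wa_wb, imap_wa_wa_wa, imap_wa_wa_wb]

lemma Set.bijOn_of_iterate_succ_eq_self {α : Type*} {f : α → α} {s : Set α} {n : ℕ}
    (hf : MapsTo f s s) (h : ∀ x ∈ s, f^[n + 1] x = x) : BijOn f s s :=
  InvOn.bijOn ⟨fun x hx => by rw [← iterate_succ_apply, h x hx],
    fun x hx => by rw [← iterate_succ_apply' f, h x hx]⟩ hf (hf.iterate n)

theorem stmt_10 :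
    Set.BijOn imap {n : ℕ | 0 < n} {n : ℕ | 0 < n} ∧
    (∀ n : ℕ, 0 < n → imap^[6] n = n) ∧
    (∃ n : ℕ, 0 < n ∧ imap^[2] n ≠ n) ∧
    (∃ n : ℕ, 0 < n ∧ imap^[3] n ≠ n) := by
  have h6 : ∀ n : ℕ, 0 < n → imap^[6] n = n := fun n hn => imap_iterate_six hn
  refine ⟨bijOn_of_iterate_succ_eq_self imap_mapsTo h6, h6, ⟨wb 1, by simp, ?_⟩,
    ⟨wa (wa (wb 1)), by simp, ?_⟩⟩
  · rw [iterate_succ_apply', iterate_one, imap_wb one_pos, imap_wa_wb (by simp)]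
    exact wa_ne_wb (by simp) one_pos
  · rw [iterate_succ_apply', isPeriodicPt_imap_wa_wa_wb one_pos, imap_wa_wa_wb one_pos]
    exact fun h => wa_ne_wb (by simp) (by simp) (wa_injective h).symm
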